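/- arXiv:1409.6254 — 3 statements merged into one kernel-verified Lean document; each statement's English description precedes it below -/
import Mathlib

section
/- Let R be a commutative Noetherian ring. The assignment Z ↦ T_Z, where T_Z = {M ∈ R-Mod : Supp(M) ⊆ Z}, is a bijection between the specialization-closed subsets of Spec(R) and the hereditary torsion classes in R-Mod. Its inverse takes a hereditary torsion class T to the set of primes p such that R/p ∈ T. -/
open CategoryTheory DirectSum

universe u

variable (R : Type u) [CommRing R]

/-- A hereditary torsion class in `R-Mod`: a class of modules closed under submodules,
quotients, extensions and arbitrary direct sums. -/
structure HereditaryTorsionClass where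
  /-- the class of torsion modules -/
  P : ModuleCat.{u} R → Prop
  subobj : ∀ (M N : ModuleCat.{u} R) (f : N ⟶ M), Function.Injective f → P M → P N
  quot : ∀ (M N : ModuleCat.{u} R) (f : M ⟶ N), Function.Surjective f → P M → P N
  ext : ∀ (M N Q : ModuleCat.{u} R) (f : N ⟶ M) (g : M ⟶ Q), Function.Injective f →
    Function.Surjective g → LinearMap.range f.hom = LinearMap.ker g.hom → P N → P Q → P M
  sums : ∀ (ι : Type u) (M : ι → ModuleCat.{u} R), (∀ i, P (M i)) →
    P (ModuleCat.of R (⨁ i, ↥(M i)))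

/-!
A hereditary torsion class `T` is determined by the primes `p` with `R ⧸ p ∈ T`: a module
lies in `T` iff `R ⧸ p` does for every `p` in its support. If `M ∈ T` and `m ∈ M` has
annihilator inside `p`, then `R ∙ m ≅ R ⧸ ann m ∈ T` surjects onto `R ⧸ p`. Conversely, a
finitely generated module over a Noetherian ring has a finite filtration with subquotients
`R ⧸ p`, `p` in its support, and every module is a quotient of the direct sum of its cyclic
submodules. Since the
support of `R ⧸ p` is the closure of `p`, the primes of `T_Z` are exactly `Z` when `Z` is
specialization-closed.
-/

namespace Module

variable {R} {M : Type*} [AddCommGroup M] [Module R M]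

lemma mem_support_quotient_iff (I : Ideal R) (p : PrimeSpectrum R) :
    p ∈ support R (R ⧸ I) ↔ I ≤ p.asIdeal := by
  rw [support_of_algebra, Ideal.Quotient.algebraMap_eq, Ideal.mk_ker, PrimeSpectrum.mem_zeroLocus,
    SetLike.coe_subset_coe]

lemma support_subset_iUnion_of_iSup_eq_top {ι : Type*} (N : ι → Submodule R M)
    (hN : ⨆ i, N i = ⊤) : support R M ⊆ ⋃ i, support R (N i) := by
  intro p hp
  have hspan : Submodule.span R (⋃ i, (N i : Set M)) = ⊤ := by
    simpa only [Submodule.span_iUnion, Submodule.span_eq] using hN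
  obtain ⟨m, hm, hann⟩ := (mem_support_iff_of_span_eq_top hspan).mp hp
  obtain ⟨i, hi⟩ := Set.mem_iUnion.mp hm
  refine Set.mem_iUnion.mpr
    ⟨i, mem_support_iff_exists_annihilator.mpr ⟨⟨m, hi⟩, fun r hr ↦ hann ?_⟩⟩
  rw [Submodule.mem_annihilator_span_singleton] at hr ⊢
  exact congrArg Subtype.val hr

lemma support_directSum_subset {ι : Type*} (M : ι → Type*) [∀ i, AddCommGroup (M i)]
    [∀ i, Module R (M i)] : support R (⨁ i, M i) ⊆ ⋃ i, support R (M i) := by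
  classical
  refine (support_subset_iUnion_of_iSup_eq_top _ DFinsupp.iSup_range_lsingle).trans
    (Set.iUnion_mono fun i ↦ ?_)
  rw [← (LinearEquiv.ofInjective _ DFinsupp.single_injective).support_eq]

end Module

namespace HereditaryTorsionClass

variable {R}

lemma P_injective :
    Function.Injective (P : HereditaryTorsionClass R → ModuleCat.{u} R → Prop) := by
  rintro ⟨⟩ ⟨⟩ rfl
  rfl

section

variable (T : HereditaryTorsionClass R) {M N : Type u} [AddCommGroup M] [Module R M]
  [AddCommGroup N] [Module R N]

lemma mem_of_linearEquiv (e : M ≃ₗ[R] N) (h : T.P (.of R M)) : T.P (.of R N) :=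
  T.subobj _ _ (ModuleCat.ofHom e.symm.toLinearMap) e.symm.injective h

lemma mem_of_subsingleton [Subsingleton M] : T.P (.of R M) :=
  T.subobj _ _ (ModuleCat.ofHom 0) (Function.injective_of_subsingleton _)
    (T.sums PEmpty (fun i ↦ i.elim) (fun i ↦ i.elim))

lemma quotient_mem_of_le {I J : Ideal R} (hIJ : I ≤ J) (hI : T.P (.of R (R ⧸ I))) :
    T.P (.of R (R ⧸ J)) :=
  T.quot _ _ (ModuleCat.ofHom (Submodule.factor hIJ)) (Submodule.factor_surjective hIJ) hI

lemma mem_of_exact {M₁ M₃ : Type u} [AddCommGroup M₁] [Module R M₁] [AddCommGroup M₃]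
    [Module R M₃] {f : M₁ →ₗ[R] M} {g : M →ₗ[R] M₃} (hfg : Function.Exact f g)
    (hf : Function.Injective f) (hg : Function.Surjective g)
    (h₁ : T.P (.of R M₁)) (h₃ : T.P (.of R M₃)) : T.P (.of R M) :=
  T.ext _ _ _ (ModuleCat.ofHom f) (ModuleCat.ofHom g) hf hg
    (LinearMap.exact_iff.mp hfg).symm h₁ h₃

lemma quotient_mem_of_mem_support (h : T.P (.of R M)) {p : PrimeSpectrum R}
    (hp : p ∈ Module.support R M) : T.P (.of R (R ⧸ p.asIdeal)) := by
  obtain ⟨m, hm⟩ := Module.mem_support_iff_exists_annihilator.mp hp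
  have hspan : T.P (.of R (R ∙ m)) :=
    T.subobj _ _ (ModuleCat.ofHom (R ∙ m).subtype) (R ∙ m).injective_subtype h
  refine T.quotient_mem_of_le (fun r hr ↦ hm ?_)
    (T.mem_of_linearEquiv (Ideal.quotTorsionOfEquivSpanSingleton R M m).symm hspan)
  rwa [Submodule.mem_annihilator_span_singleton, ← Ideal.mem_torsionOf_iff]

variable [IsNoetherianRing R]

lemma mem_of_finite_of_support [Module.Finite R M]
    (h : ∀ p ∈ Module.support R M, T.P (.of R (R ⧸ p.asIdeal))) : T.P (.of R M) := by
  induction ‹Module.Finite R M›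
    using IsNoetherianRing.induction_on_isQuotientEquivQuotientPrime R with
  | subsingleton N => exact T.mem_of_subsingleton
  | quotient N p e =>
    refine T.mem_of_linearEquiv e.symm (h p ?_)
    rw [e.support_eq, Module.mem_support_quotient_iff]
  | exact N₁ N₂ N₃ f g hf hg hfg h₁ h₃ =>
    rw [Module.support_of_exact hfg hf hg] at h
    exact T.mem_of_exact hfg hf hg (h₁ fun p hp ↦ h p (.inl hp))
      (h₃ fun p hp ↦ h p (.inr hp))

lemma mem_of_support (h : ∀ p ∈ Module.support R M, T.P (.of R (R ⧸ p.asIdeal))) :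
    T.P (.of R M) := by
  classical
  have hspan (m : M) : T.P (.of R (R ∙ m)) :=
    T.mem_of_finite_of_support fun p hp ↦ h p <|
      Module.support_subset_of_injective _ (R ∙ m).injective_subtype hp
  let π : (⨁ m : M, (R ∙ m)) →ₗ[R] M := DirectSum.toModule R M M fun m ↦ (R ∙ m).subtype
  have hπ : Function.Surjective π := fun m ↦
    ⟨DirectSum.lof R M (fun m ↦ R ∙ m) m ⟨m, Submodule.mem_span_singleton_self m⟩,
      DirectSum.toModule_lof R _ _⟩
  exact T.quot _ (.of R M) (ModuleCat.ofHom π) hπ (T.sums M (fun m ↦ .of R (R ∙ m)) hspan)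

lemma mem_iff_forall_mem_support :
    T.P (.of R M) ↔ ∀ p ∈ Module.support R M, T.P (.of R (R ⧸ p.asIdeal)) :=
  ⟨fun h _ ↦ T.quotient_mem_of_mem_support h, T.mem_of_support⟩

end

def ofSupportSubset (Z : Set (PrimeSpectrum R)) : HereditaryTorsionClass R where
  P M := Module.support R M ⊆ Z
  subobj _ _ f hf hM := (Module.support_subset_of_injective f.hom hf).trans hM
  quot _ _ f hf hM := (Module.support_subset_of_surjective f.hom hf).trans hM
  ext _ _ _ f g hf hg hfg hN hQ := by
    rw [Module.support_of_exact (LinearMap.exact_iff.mpr hfg.symm) hf hg]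
    exact Set.union_subset hN hQ
  sums _ _ hM := (Module.support_directSum_subset _).trans (Set.iUnion_subset hM)

def primes (T : HereditaryTorsionClass R) : Set (PrimeSpectrum R) :=
  {p | T.P (.of R (R ⧸ p.asIdeal))}

lemma primes_ofSupportSubset {Z : Set (PrimeSpectrum R)}
    (hZ : ∀ p q : PrimeSpectrum R, p.asIdeal ≤ q.asIdeal → p ∈ Z → q ∈ Z) :
    (ofSupportSubset Z).primes = Z := by
  ext p
  refine ⟨fun hp ↦ hp ((Module.mem_support_quotient_iff _ _).mpr le_rfl), fun hp q hq ↦ ?_⟩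
  exact hZ p q ((Module.mem_support_quotient_iff _ _).mp hq) hp

lemma ofSupportSubset_primes [IsNoetherianRing R] (T : HereditaryTorsionClass R) :
    ofSupportSubset T.primes = T :=
  P_injective <| funext fun M ↦ propext (T.mem_iff_forall_mem_support (M := M)).symm

variable (R) in
def specializationClosedEquiv [IsNoetherianRing R] :
    {Z : Set (PrimeSpectrum R) //
        ∀ p q : PrimeSpectrum R, p.asIdeal ≤ q.asIdeal → p ∈ Z → q ∈ Z} ≃
      HereditaryTorsionClass R where
  toFun Z := ofSupportSubset Z.1
  invFun T := ⟨T.primes, fun _ _ hpq hp ↦ T.quotient_mem_of_le hpq hp⟩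
  left_inv Z := Subtype.ext (primes_ofSupportSubset Z.2)
  right_inv := ofSupportSubset_primes

end HereditaryTorsionClass

/-- Over a commutative Noetherian ring `R`, the assignment
`Z ↦ T_Z = {M : Supp M ⊆ Z}` is a bijection between the specialization-closed subsets of
`Spec R` and the hereditary torsion classes in `R-Mod`, with inverse
`T ↦ {p : R/p ∈ T}`. -/
theorem stmt_3 [IsNoetherianRing R] :
    ∃ e : {Z : Set (PrimeSpectrum R) //
        ∀ p q : PrimeSpectrum R, p.asIdeal ≤ q.asIdeal → p ∈ Z → q ∈ Z} ≃
        HereditaryTorsionClass R,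
      (∀ Z (M : ModuleCat.{u} R), (e Z).P M ↔ Module.support R M ⊆ Z.1) ∧
      (∀ (T : HereditaryTorsionClass R) (p : PrimeSpectrum R),
        p ∈ (e.symm T).1 ↔ T.P (ModuleCat.of R (R ⧸ p.asIdeal))) :=
  ⟨HereditaryTorsionClass.specializationClosedEquiv R, fun _ _ ↦ Iff.rfl, fun _ _ ↦ Iff.rfl⟩
end

section
/- Let R be a commutative Noetherian ring, Z a specialization-closed subset of Spec(R), and let G_Z denote the full subcategory of R-Mod consisting of Z-closed modules, i.e. modules Y with Hom_R(T,Y) = 0 = Ext^1_R(T,Y) for all T with Supp(T) ⊆ Z. Then G_Z is closed under arbitrary direct sums in R-Mod. -/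
open CategoryTheory DirectSum

universe u

variable (R : Type u) [CommRing R] (Z : Set (PrimeSpectrum R))

/-- An `R`-module `Y` is `Z`-closed when `Hom_R(T, Y) = 0 = Ext¹_R(T, Y)` for every module `T`
supported in `Z`. -/
def IsZClosed (Y : Type u) [AddCommGroup Y] [Module R Y] : Prop :=
  ∀ (T : Type u) [AddCommGroup T] [Module R T], Module.support R T ⊆ Z →
    (∀ f : T →ₗ[R] Y, f = 0) ∧
    Subsingleton (((Ext R (ModuleCat.{u} R) 1).obj
      (Opposite.op (ModuleCat.of R T))).obj (ModuleCat.of R Y))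

/-!
Write `K.ExtensionProperty Y` when every linear map `K → Y` extends to the ambient module.
Computing `Ext¹` with a projective resolution `P₁ → P₀ → T → 0` shows that `Ext¹(T, Y) = 0` iff
`ker (P₀ → T)` has the extension property for `Y`; comparing `P₀ → T` with `R → R ⧸ I` shows that
`Ext¹(R ⧸ I, Y) = 0` is Baer's condition for the ideal `I`.

Conversely, the Zorn argument of Baer's criterion shows that Baer's condition for the ideals `I`
with `Supp(R ⧸ I) ⊆ Z` gives the extension property for every `K ≤ F` with `Supp(F ⧸ K) ⊆ Z`:
adjoining `x` to a partial extension with domain `A ⊇ K` only needs Baer's condition for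
`(A : x)`, and `R ⧸ (A : x)` embeds into `F ⧸ A`, a quotient of `F ⧸ K`.

Over a Noetherian ring every ideal is finitely generated, so a map from it into a direct sum lands
in finitely many summands, and Baer's condition passes to direct sums.
-/

section ExtensionProperty

variable {R}

open Opposite

def Submodule.ExtensionProperty {F : Type*} [AddCommGroup F] [Module R F] (K : Submodule R F)
    (Y : Type*) [AddCommGroup Y] [Module R Y] : Prop :=
  ∀ g : K →ₗ[R] Y, ∃ h : F →ₗ[R] Y, h ∘ₗ K.subtype = g

theorem LinearMap.exists_comp_eq_of_surjective_of_ker_le {P Q Y : Type*} [AddCommGroup P]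
    [Module R P] [AddCommGroup Q] [Module R Q] [AddCommGroup Y] [Module R Y] {f : P →ₗ[R] Q}
    (hf : Function.Surjective f) {g : P →ₗ[R] Y} (hfg : ker f ≤ ker g) :
    ∃ g' : Q →ₗ[R] Y, g' ∘ₗ f = g :=
  ⟨(ker f).liftQ g hfg ∘ₗ (f.quotKerEquivOfSurjective hf).symm, by ext; simp⟩

section Baer

variable {F Y : Type*} [AddCommGroup F] [Module R F] [AddCommGroup Y] [Module R Y]

theorem LinearPMap.exists_le_and_mem_domain (m : F →ₗ.[R] Y) (x : F)
    (h : (m.domain.comap (LinearMap.toSpanSingleton R F x)).ExtensionProperty Y) :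
    ∃ m' : F →ₗ.[R] Y, m ≤ m' ∧ x ∈ m'.domain := by
  set t := LinearMap.toSpanSingleton R F x
  obtain ⟨k, hk⟩ := h (m.toFun ∘ₗ t.restrict fun _ hr => hr)
  have hkm : ∀ r (hr : r • x ∈ m.domain), k r = m ⟨r • x, hr⟩ :=
    fun r hr => LinearMap.congr_fun hk ⟨r, hr⟩
  obtain ⟨k', hk'⟩ := LinearMap.exists_comp_eq_of_surjective_of_ker_le t.surjective_rangeRestrict
    (g := k) fun r hr => by
      rw [LinearMap.ker_rangeRestrict, LinearMap.mem_ker, LinearMap.toSpanSingleton_apply] at hr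
      rw [LinearMap.mem_ker, hkm r (hr ▸ m.domain.zero_mem)]
      exact (congrArg m (Subtype.ext hr : (⟨r • x, _⟩ : m.domain) = 0)).trans m.map_zero
  have hcompat : ∀ (a : m.domain) (b : LinearMap.range t), (a : F) = b → m a = k' b := by
    rintro a ⟨_, r, rfl⟩ (hab : (a : F) = t r)
    have hr : t r ∈ m.domain := hab ▸ a.2
    rw [show (⟨t r, r, rfl⟩ : LinearMap.range t) = t.rangeRestrict r from rfl,
      ← LinearMap.comp_apply, hk', hkm r hr]
    congr 1
    exact Subtype.ext hab
  exact ⟨m.sup ⟨_, k'⟩ hcompat, m.left_le_sup _ hcompat,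
    Submodule.mem_sup_right ⟨1, one_smul R x⟩⟩

theorem Submodule.ExtensionProperty.of_exists_le_and_mem_domain {K : Submodule R F}
    (h : ∀ m : F →ₗ.[R] Y, K ≤ m.domain → ∀ x, ∃ m' : F →ₗ.[R] Y, m ≤ m' ∧ x ∈ m'.domain) :
    K.ExtensionProperty Y := by
  intro g
  let g₀ : F →ₗ.[R] Y := ⟨K, g⟩
  obtain ⟨m, hgm, hmax⟩ := zorn_le_nonempty₀ {m | g₀ ≤ m}
    (fun c hc hchain _ hy => ⟨LinearPMap.sSup c hchain.directedOn,
      (hc hy).trans (LinearPMap.le_sSup _ hy), fun _ hz => LinearPMap.le_sSup _ hz⟩)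
    g₀ (le_refl g₀)
  have htop : m.domain = ⊤ := eq_top_iff'.mpr fun x => by
    obtain ⟨m', hle, hx⟩ := h m hgm.1 x
    exact (hmax.2 (hgm.trans hle) hle).1 hx
  refine ⟨m.toFun ∘ₗ (LinearEquiv.ofTop _ htop).symm, LinearMap.ext fun k => ?_⟩
  exact (hgm.2 rfl).symm

theorem Module.support_quotient_comap_toSpanSingleton_subset (A : Submodule R F) (x : F) :
    Module.support R (R ⧸ A.comap (LinearMap.toSpanSingleton R F x)) ⊆
      Module.support R (F ⧸ A) := by
  have hker : A.comap (LinearMap.toSpanSingleton R F x) =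
      LinearMap.ker (A.mkQ ∘ₗ LinearMap.toSpanSingleton R F x) := by
    rw [LinearMap.ker_comp, Submodule.ker_mkQ]
  exact Module.support_subset_of_injective _
    (LinearMap.ker_eq_bot.mp (Submodule.ker_liftQ_eq_bot' _ _ hker))

theorem Submodule.ExtensionProperty.of_support_subset {Z : Set (PrimeSpectrum R)}
    (hY : ∀ I : Ideal R, Module.support R (R ⧸ I) ⊆ Z → I.ExtensionProperty Y)
    {K : Submodule R F} (hK : Module.support R (F ⧸ K) ⊆ Z) : K.ExtensionProperty Y :=
  .of_exists_le_and_mem_domain fun m hKm x => m.exists_le_and_mem_domain x <| hY _ <|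
    (Module.support_quotient_comap_toSpanSingleton_subset _ x).trans <|
      (Module.support_subset_of_surjective _ (Submodule.factor_surjective hKm)).trans hK

end Baer

theorem DirectSum.exists_finset_apply_eq_zero {ι N : Type*} {M : ι → Type*}
    [∀ i, AddCommGroup (M i)] [∀ i, Module R (M i)] [AddCommGroup N] [Module R N]
    [Module.Finite R N] (g : N →ₗ[R] ⨁ i, M i) :
    ∃ S : Finset ι, ∀ n, ∀ i ∉ S, g n i = 0 := by
  classical
  obtain ⟨s, hs⟩ := Module.Finite.fg_top (R := R) (M := N)
  refine ⟨s.biUnion fun n => (g n).support, fun n i hi => ?_⟩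
  suffices n ∈ LinearMap.ker (DirectSum.component R ι M i ∘ₗ g) from this
  refine hs.ge.trans (Submodule.span_le.mpr fun a ha => ?_) Submodule.mem_top
  by_contra hne
  exact hi (Finset.mem_biUnion.mpr ⟨a, ha, DFinsupp.mem_support_iff.mpr hne⟩)

theorem Submodule.ExtensionProperty.directSum {ι F : Type*} {M : ι → Type*}
    [∀ i, AddCommGroup (M i)] [∀ i, Module R (M i)] [AddCommGroup F] [Module R F]
    {K : Submodule R F} (hK : K.FG) (h : ∀ i, K.ExtensionProperty (M i)) :
    K.ExtensionProperty (⨁ i, M i) := by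
  classical
  intro g
  have : Module.Finite R K := Module.Finite.iff_fg.mpr hK
  obtain ⟨S, hS⟩ := DirectSum.exists_finset_apply_eq_zero g
  choose k hk using fun i => h i (DirectSum.component R ι M i ∘ₗ g)
  refine ⟨∑ i ∈ S, DirectSum.lof R ι M i ∘ₗ k i, LinearMap.ext fun x => DFinsupp.ext fun i => ?_⟩
  have hki : k i x = g x i := LinearMap.congr_fun (hk i) x
  by_cases hi : i ∈ S <;> simp [DirectSum.lof_eq_of, DirectSum.of_apply, hi, hki, hS x i]

theorem CategoryTheory.ProjectiveResolution.subsingleton_ext_one_iff {N : ModuleCat.{u} R}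
    (P : ProjectiveResolution N) (Y : ModuleCat.{u} R) :
    Subsingleton (((Ext R (ModuleCat.{u} R) 1).obj (op N)).obj Y) ↔
      ∀ g : P.complex.X 1 ⟶ Y, P.complex.d 2 1 ≫ g = 0 →
        ∃ h : P.complex.X 0 ⟶ Y, P.complex.d 1 0 ≫ h = g := by
  rw [(P.isoExt 1 Y).toLinearEquiv.toEquiv.subsingleton_congr,
    ← ModuleCat.isZero_iff_subsingleton, ← HomologicalComplex.exactAt_iff_isZero_homology,
    HomologicalComplex.exactAt_iff' _ 0 1 2 (by simp) (by simp), ShortComplex.moduleCat_exact_iff]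
  rfl

theorem Function.Exact.forall_exists_comp_eq_iff {P₂ P₁ P₀ Y : Type*} [AddCommGroup P₂]
    [Module R P₂] [AddCommGroup P₁] [Module R P₁] [AddCommGroup P₀] [Module R P₀]
    [AddCommGroup Y] [Module R Y] {d₂ : P₂ →ₗ[R] P₁} {d₁ : P₁ →ₗ[R] P₀}
    (hd : Function.Exact d₂ d₁) :
    (∀ g : P₁ →ₗ[R] Y, g ∘ₗ d₂ = 0 → ∃ h : P₀ →ₗ[R] Y, h ∘ₗ d₁ = g) ↔
      (LinearMap.range d₁).ExtensionProperty Y := by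
  constructor
  · intro H g
    obtain ⟨h, hh⟩ := H (g ∘ₗ d₁.rangeRestrict) (LinearMap.ext fun x => by
      simp [show d₁.rangeRestrict (d₂ x) = 0 from Subtype.ext (hd.apply_apply_eq_zero x)])
    refine ⟨h, LinearMap.ext fun ⟨_, x, rfl⟩ => ?_⟩
    exact LinearMap.congr_fun hh x
  · intro H g hg
    obtain ⟨g', hg'⟩ := LinearMap.exists_comp_eq_of_surjective_of_ker_le d₁.surjective_rangeRestrict
      (g := g) (by
        rw [LinearMap.ker_rangeRestrict, hd.linearMap_ker_eq, LinearMap.range_le_ker_iff, hg])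
    obtain ⟨h, rfl⟩ := H g'
    exact ⟨h, hg'⟩

theorem CategoryTheory.ProjectiveResolution.subsingleton_ext_one_iff_extensionProperty
    {N : ModuleCat.{u} R} (P : ProjectiveResolution N) (Y : ModuleCat.{u} R) :
    Subsingleton (((Ext R (ModuleCat.{u} R) 1).obj (op N)).obj Y) ↔
      (LinearMap.ker (P.π.f 0).hom).ExtensionProperty Y := by
  have hd : Function.Exact (P.complex.d 2 1).hom (P.complex.d 1 0).hom :=
    LinearMap.exact_iff.mpr (P.exact_succ 0).moduleCat_range_eq_ker.symm
  rw [← P.exact₀.moduleCat_range_eq_ker, ← hd.forall_exists_comp_eq_iff,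
    P.subsingleton_ext_one_iff Y]
  constructor
  · intro H g hg
    obtain ⟨h, hh⟩ := H (ModuleCat.ofHom g) (ModuleCat.hom_ext hg)
    exact ⟨h.hom, congrArg ModuleCat.Hom.hom hh⟩
  · intro H g hg
    obtain ⟨h, hh⟩ := H g.hom (congrArg ModuleCat.Hom.hom hg)
    exact ⟨ModuleCat.ofHom h, ModuleCat.hom_ext hh⟩

theorem Submodule.ExtensionProperty.ker_of_projective {P P' N Y : Type*} [AddCommGroup P]
    [Module R P] [AddCommGroup P'] [Module R P'] [AddCommGroup N] [Module R N] [AddCommGroup Y]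
    [Module R Y] [Module.Projective R P] [Module.Projective R P'] {π : P →ₗ[R] N} {π' : P' →ₗ[R] N}
    (hπ : Function.Surjective π) (hπ' : Function.Surjective π')
    (h : (LinearMap.ker π).ExtensionProperty Y) : (LinearMap.ker π').ExtensionProperty Y := by
  -- With lifts `α : P' → P`, `β : P → P'` over `N` and an extension `k` of `g' ∘ β`,
  -- the map `k ∘ α + g' ∘ (1 - β ∘ α)` extends `g'`.
  intro g'
  obtain ⟨α, hα⟩ := Module.projective_lifting_property π π' hπ
  obtain ⟨β, hβ⟩ := Module.projective_lifting_property π' π hπ'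
  have hβ_ker : ∀ x ∈ LinearMap.ker π, β x ∈ LinearMap.ker π' := fun x hx => by
    simpa [← hβ] using hx
  obtain ⟨k, hk⟩ := h (g' ∘ₗ β.restrict hβ_ker)
  have hγ : ∀ x, x - β (α x) ∈ LinearMap.ker π' := fun x => by
    simp [← LinearMap.comp_apply π' β, hβ, ← LinearMap.comp_apply π α, hα]
  refine ⟨k ∘ₗ α + g' ∘ₗ (LinearMap.id - β ∘ₗ α).codRestrict _ hγ, LinearMap.ext fun x => ?_⟩
  have hαx : α x ∈ LinearMap.ker π := by
    simp [← LinearMap.comp_apply π α, hα]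
  have hkx : k (α x) = g' ⟨β (α x), hβ_ker _ hαx⟩ := LinearMap.congr_fun hk ⟨α x, hαx⟩
  simp only [LinearMap.add_apply, LinearMap.comp_apply, Submodule.coe_subtype, hkx, ← map_add]
  congr 1
  ext
  simp

theorem Ideal.extensionProperty_of_subsingleton_ext (I : Ideal R) (Y : Type u) [AddCommGroup Y]
    [Module R Y] (h : Subsingleton (((Ext R (ModuleCat.{u} R) 1).obj
      (op (ModuleCat.of R (R ⧸ I)))).obj (ModuleCat.of R Y))) :
    I.ExtensionProperty Y := by
  let P := projectiveResolution (ModuleCat.of R (R ⧸ I))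
  have := ((P.subsingleton_ext_one_iff_extensionProperty _).mp h).ker_of_projective
    ((ModuleCat.epi_iff_surjective _).mp inferInstance) I.mkQ_surjective
  convert this using 1
  exact (Submodule.ker_mkQ I).symm

end ExtensionProperty

theorem stmt_11 [IsNoetherianRing R]
    (ι : Type u) (M : ι → Type u) [∀ i, AddCommGroup (M i)] [∀ i, Module R (M i)]
    (hM : ∀ i, IsZClosed R Z (M i)) :
    IsZClosed R Z (⨁ i, M i) := by
  intro T _ _ hT
  refine ⟨fun f => LinearMap.ext fun t => DFinsupp.ext fun i =>
    LinearMap.congr_fun ((hM i T hT).1 (DirectSum.component R ι M i ∘ₗ f)) t, ?_⟩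
  have hBaer : ∀ I : Ideal R, Module.support R (R ⧸ I) ⊆ Z → I.ExtensionProperty (⨁ i, M i) :=
    fun I hI => .directSum (IsNoetherian.noetherian I) fun i =>
      I.extensionProperty_of_subsingleton_ext _ (hM i _ hI).2
  let P := projectiveResolution (ModuleCat.of R T)
  have hπ : Function.Surjective (P.π.f 0).hom :=
    (ModuleCat.epi_iff_surjective _).mp inferInstance
  rw [P.subsingleton_ext_one_iff_extensionProperty]
  exact .of_support_subset hBaer (((P.π.f 0).hom.quotKerEquivOfSurjective hπ).support_eq ▸ hT)
end

section
/- Let R be a commutative reduced Noetherian ring with minimal primes p₁, ..., pₙ, and let S be the set of non-zerodivisors of R. Then the total ring of fractions S⁻¹R is isomorphic as a ring to the product of the residue fields k(p₁) × ... × k(pₙ). -/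
/-!
In a reduced ring the zero divisors are exactly the union of the minimal primes, so when there are
finitely many of them, prime avoidance shows that every prime avoiding the non-zerodivisors is
minimal. Hence the primes of the total ring of fractions `Q` are the extensions `p Q` of the
minimal primes `p` of `R`, and they are pairwise incomparable, hence all maximal. Since `Q` is
reduced their intersection is `0`, and the Chinese remainder theorem gives `Q ≃ ∏ Q ⧸ p Q`.
Each `Q ⧸ p Q` is a field obtained from the domain `R ⧸ p` by inverting nonzero elements, so it is
the fraction field of `R ⧸ p`.
-/

universe u

open Function nonZeroDivisors

section Reduced

variable {R : Type*} [CommRing R] [IsReduced R]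

theorem biUnion_minimalPrimes_eq_compl_nonZeroDivisors :
    ⋃ p ∈ minimalPrimes R, (p : Set R) = (R⁰ : Set R)ᶜ := by
  rw [minimalPrimes, Ideal.iUnion_minimalPrimes, Ideal.radical_bot_of_isReduced]
  ext x
  simp [mem_nonZeroDivisors_iff_right, mul_comm, and_comm]

theorem Ideal.mem_minimalPrimes_of_disjoint_nonZeroDivisors (hfin : (minimalPrimes R).Finite)
    {P : Ideal R} [P.IsPrime] (hP : Disjoint (R⁰ : Set R) P) : P ∈ minimalPrimes R := by
  have hcover : (P : Set R) ⊆ ⋃ p ∈ minimalPrimes R, (p : Set R) := by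
    rw [biUnion_minimalPrimes_eq_compl_nonZeroDivisors]
    exact hP.subset_compl_left
  obtain ⟨p, hp, hPp⟩ := (Ideal.subset_union_prime_finite hfin (f := id) ⊥ ⊥
    (fun p hp _ _ ↦ hp.1.1)).mp hcover
  rwa [le_antisymm hPp (hp.2 ⟨‹_›, bot_le⟩ hPp)]

end Reduced

theorem IsLocalization.isFractionRing_quotient_map_of_isMaximal {R S : Type*} [CommRing R]
    [CommRing S] [Algebra R S] (M : Submonoid R) [IsLocalization M S] {p : Ideal R} [p.IsPrime]
    (hp : Disjoint (M : Set R) p) [(p.map (algebraMap R S)).IsMaximal] :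
    IsFractionRing (R ⧸ p) (S ⧸ p.map (algebraMap R S)) := by
  let _ := Ideal.Quotient.field (p.map (algebraMap R S))
  have hinj : Function.Injective (algebraMap (R ⧸ p) (S ⧸ p.map (algebraMap R S))) :=
    Ideal.quotientMap_injective' (IsLocalization.under_map_of_isPrime_disjoint M S ‹_› hp).le
  -- `S ⧸ pS` is already the localization of `R ⧸ p` at the image of `M` (a library instance).
  refine IsLocalization.of_le (Algebra.algebraMapSubmonoid (R ⧸ p) M) _ ?_ ?_
  · rintro _ ⟨m, hm, rfl⟩
    exact mem_nonZeroDivisors_of_ne_zero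
      (Ideal.Quotient.eq_zero_iff_mem.not.mpr (Set.disjoint_left.mp hp hm))
  · exact fun r hr ↦ .mk0 _ ((map_ne_zero_iff _ hinj).mpr (nonZeroDivisors.ne_zero hr))

namespace IsFractionRing

variable {R : Type*} [CommRing R] {Q : Type*} [CommRing Q] [Algebra R Q] [IsFractionRing R Q]

theorem under_map_of_mem_minimalPrimes {p : Ideal R} (hp : p ∈ minimalPrimes R) :
    (p.map (algebraMap R Q)).under R = p :=
  IsLocalization.under_map_of_isPrime_disjoint R⁰ Q hp.1.1
    (Ideal.disjoint_nonZeroDivisors_of_mem_minimalPrimes hp).symm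

variable [IsReduced R] (hfin : (minimalPrimes R).Finite)
include hfin

theorem under_mem_minimalPrimes (P : Ideal Q) [hP : P.IsPrime] :
    P.under R ∈ minimalPrimes R :=
  have ⟨_, hdisj⟩ := (IsLocalization.isPrime_iff_isPrime_disjoint R⁰ Q P).mp hP
  Ideal.mem_minimalPrimes_of_disjoint_nonZeroDivisors hfin hdisj

theorem isMaximal_of_isPrime (P : Ideal Q) [P.IsPrime] : P.IsMaximal := by
  obtain ⟨M, hM, hPM⟩ := P.exists_le_maximal Ideal.IsPrime.ne_top'
  have hMP : M.under R ≤ P.under R :=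
    (under_mem_minimalPrimes hfin M).2 ⟨inferInstance, bot_le⟩ (Ideal.comap_mono hPM)
  rwa [le_antisymm hPM ((IsLocalization.under_le_under_iff R⁰ Q).mp hMP)]

theorem isMaximal_map_of_mem_minimalPrimes {p : Ideal R} (hp : p ∈ minimalPrimes R) :
    (p.map (algebraMap R Q)).IsMaximal :=
  have := IsLocalization.isPrime_of_isPrime_disjoint R⁰ Q p hp.1.1
    (Ideal.disjoint_nonZeroDivisors_of_mem_minimalPrimes hp).symm
  isMaximal_of_isPrime hfin _

theorem iInf_map_minimalPrimes_eq_bot :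
    ⨅ p : minimalPrimes R, (p : Ideal R).map (algebraMap R Q) = ⊥ := by
  have : IsReduced Q := isReduced_of_injective (IsLocalization.algEquiv R⁰ Q (Localization R⁰))
    (AlgEquiv.injective _)
  refine le_bot_iff.mp ?_
  calc ⨅ p : minimalPrimes R, (p : Ideal R).map (algebraMap R Q)
      ≤ sInf {P : Ideal Q | P.IsPrime} := le_sInf fun P (hP : P.IsPrime) ↦
        iInf_le_of_le ⟨_, under_mem_minimalPrimes hfin P⟩ (IsLocalization.map_under R⁰ Q P).le
    _ = ⊥ := by rw [← nilradical_eq_sInf, nilradical_eq_zero, Ideal.zero_eq_bot]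

noncomputable def equivPiQuotientMapMinimalPrimes :
    Q ≃+* ∀ p : minimalPrimes R, Q ⧸ (p : Ideal R).map (algebraMap R Q) :=
  have := hfin.to_subtype
  have hcoprime : Pairwise (IsCoprime on fun p : minimalPrimes R ↦
      (p : Ideal R).map (algebraMap R Q)) := fun p p' hne ↦
    Ideal.isCoprime_iff_sup_eq.mpr <|
      (isMaximal_map_of_mem_minimalPrimes hfin p.2).coprime_of_ne
        (isMaximal_map_of_mem_minimalPrimes hfin p'.2) fun h ↦ hne <| Subtype.ext <| by
          rw [← under_map_of_mem_minimalPrimes (Q := Q) p.2, h,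
            under_map_of_mem_minimalPrimes p'.2]
  (RingEquiv.quotientBot Q).symm.trans <|
    (Ideal.quotEquivOfEq (iInf_map_minimalPrimes_eq_bot hfin).symm).trans <|
      Ideal.quotientInfRingEquivPiQuotient _ hcoprime

theorem isFractionRing_quotient_map_of_mem_minimalPrimes {p : Ideal R}
    (hp : p ∈ minimalPrimes R) :
    IsFractionRing (R ⧸ p) (Q ⧸ p.map (algebraMap R Q)) :=
  have := hp.1.1
  have := isMaximal_map_of_mem_minimalPrimes (Q := Q) hfin hp
  IsLocalization.isFractionRing_quotient_map_of_isMaximal R⁰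
    (Ideal.disjoint_nonZeroDivisors_of_mem_minimalPrimes hp).symm

noncomputable def equivPiFractionRingQuotientMinimalPrimes :
    Q ≃+* ∀ p : minimalPrimes R, FractionRing (R ⧸ (p : Ideal R)) :=
  (equivPiQuotientMapMinimalPrimes hfin).trans <| .piCongrRight fun p ↦
    have := isFractionRing_quotient_map_of_mem_minimalPrimes (Q := Q) hfin p.2
    (IsLocalization.algEquiv (R ⧸ (p : Ideal R))⁰ _ _).toRingEquiv

end IsFractionRing

/-- Let `R` be a commutative reduced Noetherian ring with minimal primes
`p₁, ..., pₙ`, and `S` its set of non-zerodivisors. Then the total ring of fractions `S⁻¹R` is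
isomorphic as a ring to the product of the residue fields `k(p₁) × ... × k(pₙ)` (here `k(p)`
is realized as the fraction field of `R/p`). -/
theorem stmt_17 (R : Type u) [CommRing R] [IsReduced R] [IsNoetherianRing R] :
    Nonempty (Localization (nonZeroDivisors R) ≃+*
      ∀ p : minimalPrimes R, FractionRing (R ⧸ (p : Ideal R))) :=
  ⟨IsFractionRing.equivPiFractionRingQuotientMinimalPrimes
    (minimalPrimes.finite_of_isNoetherianRing R)⟩
end
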